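/- arXiv:2002.07010 — 11 statements merged into one kernel-verified Lean document; each statement's English description precedes it below -/
import Mathlib

section
/- For any two disjoint C-sets A and B in a topological space X, there exists a clopen set C in X with A ⊆ C and C ∩ B = ∅. -/
open Set TopologicalSpace

/-- A C-set: an intersection of clopen subsets. -/
def IsCSet {X : Type*} [TopologicalSpace X] (A : Set X) : Prop :=
  ∃ S : Set (Set X), (∀ s ∈ S, IsClopen s) ∧ A = ⋂₀ S

/-- A σC-set: a countable union of C-sets. -/
def IsSigmaCSet {X : Type*} [TopologicalSpace X] (A : Set X) : Prop :=
  ∃ f : ℕ → Set X, (∀ n, IsCSet (f n)) ∧ A = ⋃ n, f n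

/-- Almost zero-dimensional: every point has a neighborhood basis of C-sets. -/
def AlmostZeroDimensional (X : Type*) [TopologicalSpace X] : Prop :=
  ∀ x : X, ∀ U ∈ nhds x, ∃ A : Set X, IsCSet A ∧ A ∈ nhds x ∧ A ⊆ U

/-- Cohesive: every point has a neighborhood containing no non-empty clopen set. -/
def Cohesive (X : Type*) [TopologicalSpace X] : Prop :=
  ∀ x : X, ∃ U ∈ nhds x, ∀ A : Set X, A ⊆ U → IsClopen A → A = ∅

/-- Zero-dimensional: every point has a neighborhood basis of clopen sets. -/
def ZeroDimensional (X : Type*) [TopologicalSpace X] : Prop :=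
  ∀ x : X, ∀ U ∈ nhds x, ∃ V : Set X, IsClopen V ∧ x ∈ V ∧ V ⊆ U

theorem disjoint_CSets_separated_by_clopen {X : Type*} [TopologicalSpace X]
    [MetrizableSpace X] [SeparableSpace X] {A B : Set X}
    (hA : IsCSet A) (hB : IsCSet B) (hAB : Disjoint A B) :
    ∃ C : Set X, IsClopen C ∧ A ⊆ C ∧ C ∩ B = ∅ := by
  classical
  haveI : SecondCountableTopology X := by
    letI := TopologicalSpace.metrizableSpaceMetric X
    exact UniformSpace.secondCountable_of_separable X
  obtain ⟨S, hS, rfl⟩ := hA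
  obtain ⟨T, hT, rfl⟩ := hB
  have hFopen : ∀ f ∈ (compl '' S) ∪ (compl '' T), IsOpen f := by
    rintro f (⟨s, hs, rfl⟩ | ⟨t, ht, rfl⟩)
    · exact (hS s hs).compl.isOpen
    · exact (hT t ht).compl.isOpen
  obtain ⟨F', hF'count, hF'sub, hF'union⟩ :=
    TopologicalSpace.isOpen_sUnion_countable _ hFopen
  have hcover : ⋃₀ F' = univ := by
    rw [hF'union]
    ext x
    simp only [mem_univ, iff_true, mem_sUnion]
    have hx : ¬ (x ∈ ⋂₀ S ∧ x ∈ ⋂₀ T) := by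
      intro ⟨h1, h2⟩
      exact absurd h2 (disjoint_left.mp hAB h1)
    rw [not_and_or] at hx
    rcases hx with hx | hx
    · obtain ⟨s, hs, hxs⟩ : ∃ s ∈ S, x ∉ s := by
        simpa [mem_sInter] using hx
      exact ⟨sᶜ, Or.inl ⟨s, hs, rfl⟩, hxs⟩
    · obtain ⟨t, ht, hxt⟩ : ∃ t ∈ T, x ∉ t := by
        simpa [mem_sInter] using hx
      exact ⟨tᶜ, Or.inr ⟨t, ht, rfl⟩, hxt⟩
  obtain ⟨W, hW⟩ :=
    (hF'count.insert (∅ : Set X)).exists_eq_range (insert_nonempty _ _)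
  have hWmem : ∀ n, W n = ∅ ∨ W n ∈ (compl '' S) ∪ (compl '' T) := by
    intro n
    have : W n ∈ insert (∅ : Set X) F' := hW ▸ mem_range_self n
    rcases this with h | h
    · exact Or.inl h
    · exact Or.inr (hF'sub h)
  have hWclopen : ∀ n, IsClopen (W n) := by
    intro n
    rcases hWmem n with h | (⟨s, hs, h⟩ | ⟨t, ht, h⟩)
    · rw [h]; exact isClopen_empty
    · rw [← h]; exact (hS s hs).compl
    · rw [← h]; exact (hT t ht).compl
  have hWdisj : ∀ n, W n ∩ ⋂₀ S = ∅ ∨ W n ∩ ⋂₀ T = ∅ := by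
    intro n
    rcases hWmem n with h | (⟨s, hs, h⟩ | ⟨t, ht, h⟩)
    · rw [h]; exact Or.inl (empty_inter _)
    · refine Or.inl ?_
      rw [← h, eq_empty_iff_forall_notMem]
      rintro x ⟨hx1, hx2⟩
      exact hx1 (hx2 s hs)
    · refine Or.inr ?_
      rw [← h, eq_empty_iff_forall_notMem]
      rintro x ⟨hx1, hx2⟩
      exact hx1 (hx2 t ht)
  have hWcover : ∀ x : X, ∃ n, x ∈ W n := by
    intro x
    have : x ∈ ⋃₀ insert (∅ : Set X) F' := by
      rw [sUnion_insert, hcover]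
      simp
    rw [hW] at this
    obtain ⟨w, ⟨n, rfl⟩, hxw⟩ := this
    exact ⟨n, hxw⟩
  -- pieces of the disjointification
  set P : ℕ → Set X := fun n => W n \ ⋃ k ∈ Finset.range n, W k with hP
  have hPclopen : ∀ n, IsClopen (P n) :=
    fun n => (hWclopen n).diff (isClopen_biUnion_finset fun k _ => hWclopen k)
  have hPmem : ∀ x n, x ∈ P n ↔ n = Nat.find (hWcover x) := by
    intro x n
    constructor
    · rintro ⟨hx1, hx2⟩
      simp only [Finset.mem_range, mem_iUnion, not_exists] at hx2
      have h1 : Nat.find (hWcover x) ≤ n := Nat.find_le hx1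
      rcases lt_or_eq_of_le h1 with h | h
      · exact absurd (Nat.find_spec (hWcover x)) (hx2 _ h)
      · exact h.symm
    · rintro rfl
      refine ⟨Nat.find_spec (hWcover x), ?_⟩
      simp only [Finset.mem_range, mem_iUnion, not_exists]
      intro k hk
      exact Nat.find_min (hWcover x) hk
  refine ⟨⋃ n, if W n ∩ ⋂₀ T = ∅ then P n else ∅, ⟨?_, ?_⟩, ?_, ?_⟩
  · -- closed : complement is a union of clopen sets
    have hcompl : (⋃ n, if W n ∩ ⋂₀ T = ∅ then P n else ∅)ᶜ
        = ⋃ n, if W n ∩ ⋂₀ T = ∅ then (∅ : Set X) else P n := by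
      ext x
      simp only [mem_compl_iff, mem_iUnion, not_exists]
      constructor
      · intro h
        refine ⟨Nat.find (hWcover x), ?_⟩
        have hx := h (Nat.find (hWcover x))
        split_ifs with hc
        · rw [if_pos hc] at hx
          exact absurd ((hPmem x _).mpr rfl) hx
        · exact (hPmem x _).mpr rfl
      · rintro ⟨n, hn⟩ m hm
        split_ifs at hn with hc
        · exact notMem_empty x hn
        · split_ifs at hm with hc'
          · have h1 : m = Nat.find (hWcover x) := (hPmem x m).mp hm
            have h2 : n = Nat.find (hWcover x) := (hPmem x n).mp hn
            rw [h1, ← h2] at hc'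
            exact hc hc'
          · exact notMem_empty x hm
    rw [← isOpen_compl_iff, hcompl]
    refine isOpen_iUnion fun n => ?_
    split_ifs
    · exact isOpen_empty
    · exact (hPclopen n).isOpen
  · refine isOpen_iUnion fun n => ?_
    split_ifs
    · exact (hPclopen n).isOpen
    · exact isOpen_empty
  · -- A ⊆ C
    intro x hx
    set n := Nat.find (hWcover x) with hn
    have hxn : x ∈ P n := (hPmem x n).mpr rfl
    have hcond : W n ∩ ⋂₀ T = ∅ := by
      rcases hWdisj n with h | h
      · exfalso
        have : x ∈ W n ∩ ⋂₀ S := ⟨hxn.1, hx⟩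
        rw [h] at this
        exact this
      · exact h
    exact mem_iUnion.mpr ⟨n, by rw [if_pos hcond]; exact hxn⟩
  · -- C ∩ B = ∅
    rw [eq_empty_iff_forall_notMem]
    rintro x ⟨hxC, hxB⟩
    obtain ⟨n, hn⟩ := mem_iUnion.mp hxC
    split_ifs at hn with hc
    · have : x ∈ W n ∩ ⋂₀ T := ⟨hn.1, hxB⟩
      rw [hc] at this
      exact this
    · exact notMem_empty x hn
end

section
/- If A is a subset of an almost zero-dimensional space X and there exists a σC-set B with ∂A ⊆ B ⊆ closure(A), then closure(A) is a C-set in X. -/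
open Set TopologicalSpace

lemma IsClopen.isCSet' {X : Type*} [TopologicalSpace X] {A : Set X} (h : IsClopen A) :
    IsCSet A :=
  ⟨{A}, by simpa using h, by simp⟩

lemma IsCSet.union' {X : Type*} [TopologicalSpace X] {A B : Set X}
    (hA : IsCSet A) (hB : IsCSet B) : IsCSet (A ∪ B) := by
  obtain ⟨S, hS, rfl⟩ := hA
  obtain ⟨T, hT, rfl⟩ := hB
  refine ⟨{u | ∃ s ∈ S, ∃ t ∈ T, u = s ∪ t}, ?_, ?_⟩
  · rintro u ⟨s, hs, t, ht, rfl⟩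
    exact (hS s hs).union (hT t ht)
  · apply Set.Subset.antisymm
    · rintro x (hx | hx) u ⟨s, hs, t, ht, rfl⟩
      · exact Or.inl (hx s hs)
      · exact Or.inr (hx t ht)
    · intro x hx
      by_cases hxs : x ∈ ⋂₀ S
      · exact Or.inl hxs
      · rw [mem_sInter] at hxs
        push_neg at hxs
        obtain ⟨s, hs, hxs⟩ := hxs
        refine Or.inr ?_
        intro t ht
        rcases hx (s ∪ t) ⟨s, hs, t, ht, rfl⟩ with h | h
        · exact absurd h hxs
        · exact h

lemma IsCSet.exists_clopen' {X : Type*} [TopologicalSpace X] {A : Set X} (h : IsCSet A)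
    {x : X} (hx : x ∉ A) : ∃ s : Set X, IsClopen s ∧ A ⊆ s ∧ x ∉ s := by
  obtain ⟨S, hS, rfl⟩ := h
  rw [mem_sInter] at hx
  push_neg at hx
  obtain ⟨s, hs, hxs⟩ := hx
  exact ⟨s, hS s hs, fun y hy => hy s hs, hxs⟩

/-- Two disjoint C-sets in a second-countable space can be separated by a clopen set. -/
lemma exists_clopen_separating {X : Type*} [TopologicalSpace X] [SecondCountableTopology X]
    {H K : Set X} (hH : IsCSet H) (hK : IsCSet K) (hd : ∀ y ∈ H, y ∉ K) :
    ∃ W : Set X, IsClopen W ∧ H ⊆ W ∧ ∀ y ∈ W, y ∉ K := by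
  classical
  have key : ∀ y : X, ∃ G : Set X,
      IsClopen G ∧ y ∈ G ∧ ((∀ z ∈ G, z ∉ K) ∨ (∀ z ∈ G, z ∉ H)) := by
    intro y
    by_cases hy : y ∈ K
    · obtain ⟨s, hs, hHs, hys⟩ := hH.exists_clopen' (fun h => hd y h hy)
      exact ⟨sᶜ, hs.compl, hys, Or.inr fun z hz hzH => hz (hHs hzH)⟩
    · obtain ⟨s, hs, hKs, hys⟩ := hK.exists_clopen' hy
      exact ⟨sᶜ, hs.compl, hys, Or.inl fun z hz hzK => hz (hKs hzK)⟩
  choose G hGc hGm hGor using key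
  obtain ⟨t, htc, hteq⟩ :=
    TopologicalSpace.isOpen_iUnion_countable G (fun y => (hGc y).isOpen)
  rcases t.eq_empty_or_nonempty with rfl | htne
  · refine ⟨∅, isClopen_empty, ?_, by simp⟩
    intro y hy
    have h1 : y ∈ ⋃ i, G i := mem_iUnion.mpr ⟨y, hGm y⟩
    rw [← hteq] at h1
    simp at h1
  · obtain ⟨f, rfl⟩ := htc.exists_eq_range htne
    have hcov : ∀ x : X, ∃ n, x ∈ G (f n) := by
      intro x
      have h1 : x ∈ ⋃ i, G i := mem_iUnion.mpr ⟨x, hGm x⟩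
      rw [← hteq] at h1
      simp only [mem_iUnion, mem_range, exists_prop] at h1
      obtain ⟨i, ⟨n, rfl⟩, hi⟩ := h1
      exact ⟨n, hi⟩
    set D : ℕ → Set X := fun n => G (f n) \ ⋃ m ∈ Finset.range n, G (f m) with hD
    have hDsub : ∀ n, D n ⊆ G (f n) := fun n => diff_subset
    have hDopen : ∀ n, IsOpen (D n) := by
      intro n
      exact (hGc (f n)).isOpen.sdiff
        (Set.Finite.isClosed_biUnion (Finset.range n).finite_toSet
          (fun m _ => (hGc (f m)).isClosed))
    have hDmem : ∀ x : X, ∃ n, x ∈ D n := by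
      intro x
      have hex := hcov x
      refine ⟨Nat.find hex, Nat.find_spec hex, ?_⟩
      intro hmem
      simp only [mem_iUnion, Finset.mem_range, exists_prop] at hmem
      obtain ⟨m, hm, hxm⟩ := hmem
      exact Nat.find_min hex hm hxm
    have hDdisj : ∀ m n, m < n → ∀ x, x ∈ D m → x ∉ D n := by
      intro m n hmn x hxm hxn
      exact hxn.2 (mem_iUnion₂.mpr ⟨m, Finset.mem_range.mpr hmn, hDsub m hxm⟩)
    set L : ℕ → Prop := fun n => ∀ z ∈ G (f n), z ∉ K with hL
    refine ⟨⋃ n ∈ {n | L n}, D n, ⟨?_, ?_⟩, ?_, ?_⟩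
    · -- closed
      rw [← isOpen_compl_iff]
      have hcompl : (⋃ n ∈ {n | L n}, D n)ᶜ = ⋃ n ∈ {n | ¬ L n}, D n := by
        apply Set.Subset.antisymm
        · intro z hz
          obtain ⟨n, hn⟩ := hDmem z
          by_cases hLn : L n
          · exact absurd (mem_iUnion₂.mpr ⟨n, hLn, hn⟩) hz
          · exact mem_iUnion₂.mpr ⟨n, hLn, hn⟩
        · intro z hz hz'
          obtain ⟨n, hLn, hn⟩ := mem_iUnion₂.mp hz
          obtain ⟨m, hLm, hm⟩ := mem_iUnion₂.mp hz'
          rcases lt_trichotomy m n with h | rfl | h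
          · exact hDdisj m n h z hm hn
          · exact hLn hLm
          · exact hDdisj n m h z hn hm
      rw [hcompl]
      exact isOpen_biUnion (fun n _ => hDopen n)
    · exact isOpen_biUnion (fun n _ => hDopen n)
    · intro y hy
      obtain ⟨n, hn⟩ := hDmem y
      rcases hGor (f n) with h | h
      · exact mem_iUnion₂.mpr ⟨n, h, hn⟩
      · exact absurd hy (h y (hDsub n hn))
    · intro y hy
      obtain ⟨n, hLn, hn⟩ := mem_iUnion₂.mp hy
      exact hLn y (hDsub n hn)

/-- In a second-countable almost zero-dimensional space, every open set admits a countable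
cover by C-sets contained in it whose interiors cover it. -/
lemma exists_cset_nbhd_cover {X : Type*} [TopologicalSpace X] [SecondCountableTopology X]
    (hX : AlmostZeroDimensional X) {O : Set X} (hO : IsOpen O) :
    ∃ E : ℕ → Set X, (∀ n, IsCSet (E n)) ∧ (∀ n, E n ⊆ O) ∧ O ⊆ ⋃ n, interior (E n) := by
  classical
  have key : ∀ y : X, ∃ Ey : Set X, IsCSet Ey ∧ Ey ⊆ O ∧ (y ∈ O → y ∈ interior Ey) := by
    intro y
    by_cases hy : y ∈ O
    · obtain ⟨Ey, he1, he2, he3⟩ := hX y O (hO.mem_nhds hy)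
      exact ⟨Ey, he1, he3, fun _ => mem_interior_iff_mem_nhds.mpr he2⟩
    · exact ⟨∅, isClopen_empty.isCSet', empty_subset _, fun h => absurd h hy⟩
  choose Ey he1 he2 he3 using key
  obtain ⟨t, htc, hteq⟩ := TopologicalSpace.isOpen_iUnion_countable
    (fun y => interior (Ey y)) (fun _ => isOpen_interior)
  rcases t.eq_empty_or_nonempty with rfl | htne
  · refine ⟨fun _ => ∅, fun _ => isClopen_empty.isCSet', fun _ => empty_subset _, ?_⟩
    intro y hy
    have h1 : y ∈ ⋃ i, interior (Ey i) := mem_iUnion.mpr ⟨y, he3 y hy⟩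
    rw [← hteq] at h1
    simp at h1
  · obtain ⟨f, rfl⟩ := htc.exists_eq_range htne
    refine ⟨fun n => Ey (f n), fun n => he1 _, fun n => he2 _, ?_⟩
    intro y hy
    have h1 : y ∈ ⋃ i, interior (Ey i) := mem_iUnion.mpr ⟨y, he3 y hy⟩
    rw [← hteq] at h1
    simp only [mem_iUnion, mem_range, exists_prop] at h1
    obtain ⟨i, ⟨n, rfl⟩, hi⟩ := h1
    exact mem_iUnion.mpr ⟨n, hi⟩

theorem closure_isCSet_of_sigmaCSet_between {X : Type*} [TopologicalSpace X]
    [MetrizableSpace X] [SeparableSpace X] (hX : AlmostZeroDimensional X)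
    {A B : Set X} (hB : IsSigmaCSet B) (h1 : frontier A ⊆ B) (h2 : B ⊆ closure A) :
    IsCSet (closure A) := by
  classical
  letI : MetricSpace X := TopologicalSpace.metrizableSpaceMetric X
  haveI : SecondCountableTopology X := UniformSpace.secondCountable_of_separable X
  -- Key step: each point outside `closure A` is separated from it by a clopen set.
  have key : ∀ x, x ∉ closure A → ∃ V : Set X, IsClopen V ∧ x ∈ V ∧
      ∀ y ∈ V, y ∉ closure A := by
    intro x hx
    obtain ⟨Bf, hBfc, hBeq⟩ := hB
    have hPopen : IsOpen (closure A)ᶜ := isClosed_closure.isOpen_compl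
    obtain ⟨C, hCc, hCx, hCP⟩ := hX x (closure A)ᶜ (hPopen.mem_nhds hx)
    obtain ⟨EP, hEPc, hEPsub, hEPcov⟩ := exists_cset_nbhd_cover hX hPopen
    obtain ⟨EQ, hEQc, hEQsub, hEQcov⟩ :=
      exists_cset_nbhd_cover hX (isOpen_interior (s := A))
    -- the protected sets
    set PP : ℕ → Set X := fun m => Nat.rec C (fun k ih => ih ∪ EP k) m with hPP
    have hPPs : ∀ m, PP (m + 1) = PP m ∪ EP m := fun _ => rfl
    have hPPcset : ∀ m, IsCSet (PP m) := by
      intro m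
      induction m with
      | zero => exact hCc
      | succ k ih => exact ih.union' (hEPc k)
    have hPPP : ∀ m, PP m ⊆ (closure A)ᶜ := by
      intro m
      induction m with
      | zero => exact hCP
      | succ k ih => exact union_subset ih (hEPsub k)
    have hCPP : ∀ m, C ⊆ PP m := by
      intro m
      induction m with
      | zero => exact Set.Subset.rfl
      | succ k ih => exact ih.trans subset_union_left
    have hEPPP : ∀ k m, k < m → EP k ⊆ PP m := by
      intro k m
      induction m with
      | zero => omega
      | succ n ih =>
        intro hkm
        rcases Nat.lt_succ_iff_lt_or_eq.mp hkm with h | rfl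
        · exact (ih h).trans subset_union_left
        · exact subset_union_right
    -- choose the absorbing clopen sets
    have hW1 : ∀ m, ∃ W : Set X, IsClopen W ∧ EQ m ⊆ W ∧ ∀ y ∈ W, y ∉ PP (m + 1) := by
      intro m
      refine exists_clopen_separating (hEQc m) (hPPcset (m + 1)) ?_
      intro y hy hy'
      exact hPPP (m + 1) hy' (subset_closure (interior_subset (hEQsub m hy)))
    have hW2 : ∀ m, ∃ W : Set X, IsClopen W ∧ Bf m ⊆ W ∧ ∀ y ∈ W, y ∉ PP (m + 1) := by
      intro m
      refine exists_clopen_separating (hBfc m) (hPPcset (m + 1)) ?_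
      intro y hy hy'
      refine hPPP (m + 1) hy' (h2 ?_)
      rw [hBeq]
      exact mem_iUnion.mpr ⟨m, hy⟩
    choose W1 hW1c hW1s hW1d using hW1
    choose W2 hW2c hW2s hW2d using hW2
    set U : Set X := (⋃ m, W1 m) ∪ ⋃ m, W2 m with hU
    have hUopen : IsOpen U :=
      (isOpen_iUnion fun m => (hW1c m).isOpen).union (isOpen_iUnion fun m => (hW2c m).isOpen)
    have hxC : x ∈ C := mem_of_mem_nhds hCx
    have hxU : x ∉ U := by
      rintro (hxu | hxu)
      · obtain ⟨m, hm⟩ := mem_iUnion.mp hxu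
        exact hW1d m x hm (hCPP (m + 1) hxC)
      · obtain ⟨m, hm⟩ := mem_iUnion.mp hxu
        exact hW2d m x hm (hCPP (m + 1) hxC)
    have hclU : closure A ⊆ U := by
      intro y hy
      by_cases hyi : y ∈ interior A
      · obtain ⟨n, hn⟩ := mem_iUnion.mp (hEQcov hyi)
        exact Or.inl (mem_iUnion.mpr ⟨n, hW1s n (interior_subset hn)⟩)
      · have hyf : y ∈ frontier A := ⟨hy, hyi⟩
        have hyB : y ∈ B := h1 hyf
        rw [hBeq] at hyB
        obtain ⟨n, hn⟩ := mem_iUnion.mp hyB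
        exact Or.inr (mem_iUnion.mpr ⟨n, hW2s n hn⟩)
    have hUc : IsOpen Uᶜ := by
      rw [isOpen_iff_mem_nhds]
      intro y hy
      have hyP : y ∈ (closure A)ᶜ := fun h => hy (hclU h)
      obtain ⟨k, hk⟩ := mem_iUnion.mp (hEPcov hyP)
      set Uk : Set X := ⋃ m ∈ Finset.range k, (W1 m ∪ W2 m) with hUk
      have hUkclosed : IsClosed Uk :=
        Set.Finite.isClosed_biUnion (Finset.range k).finite_toSet
          (fun m _ => (hW1c m).isClosed.union (hW2c m).isClosed)
      have hyUk : y ∉ Uk := by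
        intro hmem
        apply hy
        obtain ⟨m, _, hm2⟩ := mem_iUnion₂.mp hmem
        rcases hm2 with h | h
        · exact Or.inl (mem_iUnion.mpr ⟨m, h⟩)
        · exact Or.inr (mem_iUnion.mpr ⟨m, h⟩)
      have hN : interior (EP k) ∩ Ukᶜ ∈ nhds y :=
        Filter.inter_mem (isOpen_interior.mem_nhds hk) (hUkclosed.isOpen_compl.mem_nhds hyUk)
      refine Filter.mem_of_superset hN ?_
      rintro z ⟨hz1, hz2⟩
      show z ∉ U
      rintro (hzU | hzU)
      · obtain ⟨m, hm⟩ := mem_iUnion.mp hzU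
        by_cases hmk : m < k
        · exact hz2 (mem_iUnion₂.mpr ⟨m, Finset.mem_range.mpr hmk, Or.inl hm⟩)
        · exact hW1d m z hm (hEPPP k (m + 1) (by omega) (interior_subset hz1))
      · obtain ⟨m, hm⟩ := mem_iUnion.mp hzU
        by_cases hmk : m < k
        · exact hz2 (mem_iUnion₂.mpr ⟨m, Finset.mem_range.mpr hmk, Or.inr hm⟩)
        · exact hW2d m z hm (hEPPP k (m + 1) (by omega) (interior_subset hz1))
    refine ⟨Uᶜ, ⟨hUopen.isClosed_compl, hUc⟩, hxU, ?_⟩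
    intro y hy hy'
    exact hy (hclU hy')
  refine ⟨{s | IsClopen s ∧ closure A ⊆ s}, fun s hs => hs.1, ?_⟩
  apply Set.Subset.antisymm
  · exact fun y hy s hs => hs.2 hy
  · intro y hy
    by_contra hyc
    obtain ⟨V, hVc, hyV, hVd⟩ := key y hyc
    have hmem : Vᶜ ∈ {s | IsClopen s ∧ closure A ⊆ s} :=
      ⟨hVc.compl, fun z hz hzV => hVd z hzV hz⟩
    exact (mem_sInter.mp hy Vᶜ hmem) hyV
end

section
/- If x is a point of a space X, A is a neighborhood of x (x is in the interior of A), and the boundary ∂A is a C-set in X, then there exists a clopen set D of X with x ∈ D ⊆ interior(A). -/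
open Set TopologicalSpace

theorem clopen_nbhd_of_CSet_frontier {X : Type*} [TopologicalSpace X]
    [MetrizableSpace X] [SeparableSpace X] {A : Set X} {x : X}
    (hx : x ∈ interior A) (hf : IsCSet (frontier A)) :
    ∃ D : Set X, IsClopen D ∧ x ∈ D ∧ D ⊆ interior A := by
  obtain ⟨S, hS, hSeq⟩ := hf
  have hxF : x ∉ frontier A := fun h => h.2 hx
  rw [hSeq, mem_sInter] at hxF
  push_neg at hxF
  obtain ⟨s, hsS, hxs⟩ := hxF
  have hsub : frontier A ⊆ s := hSeq ▸ sInter_subset_of_mem hsS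
  have hcl : IsClopen s := hS s hsS
  refine ⟨sᶜ ∩ closure A, ?_, ⟨hxs, subset_closure (interior_subset hx)⟩, ?_⟩
  · have key : sᶜ ∩ closure A = sᶜ ∩ interior A := by
      ext y
      constructor
      · rintro ⟨hy1, hy2⟩
        refine ⟨hy1, ?_⟩
        by_contra hy3
        exact hy1 (hsub ⟨hy2, hy3⟩)
      · rintro ⟨hy1, hy2⟩
        exact ⟨hy1, subset_closure (interior_subset hy2)⟩
    constructor
    · exact (hcl.compl.isClosed).inter isClosed_closure
    · rw [key]; exact hcl.compl.isOpen.inter isOpen_interior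
  · rintro y ⟨hy1, hy2⟩
    by_contra hy3
    exact hy1 (hsub ⟨hy2, hy3⟩)
end

section
/- Every almost zero-dimensional space that has a basis of open sets whose boundaries are σC-sets is zero-dimensional. -/
open Set TopologicalSpace

/-- Shell separation: given a sequence of clopen sets, each of which contains `A` or
contains `C`, such that every point eventually escapes the sequence, there is a
clopen set containing `C` and disjoint from `A`. -/
lemma shell_sep {X : Type*} [TopologicalSpace X] (e : ℕ → Set X)
    (hcl : ∀ k, IsClopen (e k)) {A C : Set X}
    (htag : ∀ k, A ⊆ e k ∨ C ⊆ e k) (hesc : ∀ z : X, ∃ k, z ∉ e k) :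
    ∃ t : Set X, IsClopen t ∧ C ⊆ t ∧ Disjoint A t := by
  classical
  set shell : ℕ → Set X := fun k => (⋂ i ∈ Finset.range k, e i) \ e k with hshell
  have hshellclopen : ∀ k, IsClopen (shell k) :=
    fun k => (isClopen_biInter_finset fun i _ => hcl i).diff (hcl k)
  -- every point is in exactly one shell
  have hcover : ∀ z : X, ∃ k, z ∈ shell k := by
    intro z
    obtain ⟨k, hk⟩ := hesc z
    have hfind := Nat.find_spec (⟨k, hk⟩ : ∃ k, z ∉ e k)
    refine ⟨Nat.find (⟨k, hk⟩ : ∃ k, z ∉ e k), ?_, hfind⟩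
    simp only [Finset.mem_range, mem_iInter]
    intro i hi
    by_contra hzi
    exact absurd (Nat.find_min (⟨k, hk⟩ : ∃ k, z ∉ e k) hi) (by simpa using hzi)
  have huniq : ∀ {z : X} {k k' : ℕ}, z ∈ shell k → z ∈ shell k' → k = k' := by
    intro z k k' hk hk'
    by_contra hne
    rcases Nat.lt_or_ge k k' with h | h
    · have : z ∈ e k := by
        have := hk'.1
        simp only [mem_iInter, Finset.mem_range] at this
        exact this k h
      exact hk.2 this
    · have hk'k : k' < k := lt_of_le_of_ne h (fun hh => hne hh.symm)
      have : z ∈ e k' := by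
        have := hk.1
        simp only [mem_iInter, Finset.mem_range] at this
        exact this k' hk'k
      exact hk'.2 this
  refine ⟨⋃ k ∈ {k : ℕ | A ⊆ e k}, shell k, ⟨?_, ?_⟩, ?_, ?_⟩
  · -- closed: the complement is the union of the other shells
    have hcompl : (⋃ k ∈ {k : ℕ | A ⊆ e k}, shell k)ᶜ
        = ⋃ k ∈ {k : ℕ | ¬ A ⊆ e k}, shell k := by
      ext z
      simp only [mem_compl_iff, mem_iUnion, exists_prop, mem_setOf_eq]
      constructor
      · intro hz
        obtain ⟨k, hk⟩ := hcover z
        refine ⟨k, ?_, hk⟩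
        intro hAk
        exact hz ⟨k, hAk, hk⟩
      · rintro ⟨k, hkA, hk⟩ ⟨k', hk'A, hk'⟩
        exact hkA (huniq hk' hk ▸ hk'A)
    rw [← isOpen_compl_iff, hcompl]
    exact isOpen_biUnion fun k _ => (hshellclopen k).isOpen
  · exact isOpen_biUnion fun k _ => (hshellclopen k).isOpen
  · -- C is contained in t
    intro z hz
    obtain ⟨k, hk⟩ := hcover z
    have hAk : A ⊆ e k := by
      rcases htag k with h | h
      · exact h
      · exact absurd (h hz) hk.2
    exact mem_biUnion hAk hk
  · -- A is disjoint from t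
    rw [Set.disjoint_left]
    intro z hzA hzt
    simp only [mem_iUnion, exists_prop, mem_setOf_eq] at hzt
    obtain ⟨k, hAk, hk⟩ := hzt
    exact hk.2 (hAk hzA)

/-- In a second-countable space, two disjoint C-sets can be separated by a clopen set. -/
lemma clopen_sep_of_isCSet {X : Type*} [TopologicalSpace X] [SecondCountableTopology X]
    {A C : Set X} (hA : IsCSet A) (hC : IsCSet C) (hAC : Disjoint A C) :
    ∃ u : Set X, IsClopen u ∧ A ⊆ u ∧ Disjoint u C := by
  classical
  obtain ⟨SA, hSA, hAeq⟩ := hA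
  obtain ⟨SC, hSC, hCeq⟩ := hC
  -- the complements of members of SA ∪ SC cover X
  have hcover : ⋃ i : ↥(SA ∪ SC), ((i : Set X))ᶜ = univ := by
    ext z
    simp only [mem_iUnion, mem_compl_iff, mem_univ, iff_true]
    by_contra hz
    push_neg at hz
    have hzA : z ∈ A := by
      rw [hAeq]
      exact fun s hs => hz ⟨s, Or.inl hs⟩
    have hzC : z ∈ C := by
      rw [hCeq]
      exact fun s hs => hz ⟨s, Or.inr hs⟩
    exact (Set.disjoint_left.1 hAC) hzA hzC
  obtain ⟨T, hTc, hTU⟩ :=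
    TopologicalSpace.isOpen_iUnion_countable (fun i : ↥(SA ∪ SC) => ((i : Set X))ᶜ)
      (fun i => by
        rcases i.2 with h | h
        · exact (hSA _ h).compl.isOpen
        · exact (hSC _ h).compl.isOpen)
  -- enumerate the countable family together with `univ`
  have hE'c : (insert univ ((fun i : ↥(SA ∪ SC) => (i : Set X)) '' T) : Set (Set X)).Countable :=
    (hTc.image _).insert _
  have hE'ne : (insert univ ((fun i : ↥(SA ∪ SC) => (i : Set X)) '' T) : Set (Set X)).Nonempty :=
    ⟨univ, mem_insert _ _⟩
  obtain ⟨e, he⟩ := hE'c.exists_eq_range hE'ne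
  have hemem : ∀ k, e k ∈ (insert univ ((fun i : ↥(SA ∪ SC) => (i : Set X)) '' T) : Set (Set X)) := by
    intro k
    rw [he]
    exact mem_range_self k
  have hclopen : ∀ k, IsClopen (e k) := by
    intro k
    rcases hemem k with h | h
    · rw [h]; exact isClopen_univ
    · obtain ⟨i, _, hik⟩ := h
      rw [← hik]
      rcases i.2 with hh | hh
      · exact hSA _ hh
      · exact hSC _ hh
  have htag : ∀ k, C ⊆ e k ∨ A ⊆ e k := by
    intro k
    rcases hemem k with h | h
    · left; rw [h]; exact subset_univ _
    · obtain ⟨i, _, hik⟩ := h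
      rw [← hik]
      rcases i.2 with hh | hh
      · right; rw [hAeq]; exact sInter_subset_of_mem hh
      · left; rw [hCeq]; exact sInter_subset_of_mem hh
  have hesc : ∀ z : X, ∃ k, z ∉ e k := by
    intro z
    have : z ∈ ⋃ i ∈ T, ((i : Set X))ᶜ := by
      rw [hTU, hcover]; exact mem_univ z
    simp only [mem_iUnion, exists_prop] at this
    obtain ⟨i, hiT, hzi⟩ := this
    have : (i : Set X) ∈ range e := by
      rw [← he]
      exact mem_insert_of_mem _ ⟨i, hiT, rfl⟩
    obtain ⟨k, hk⟩ := this
    exact ⟨k, by rw [hk]; exact hzi⟩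
  -- apply shell separation with roles (A := C, C := A)
  obtain ⟨t, htcl, hAt, hCt⟩ := shell_sep e hclopen htag hesc
  exact ⟨t, htcl, hAt, hCt.symm⟩

theorem rim_sigmaCSet_azd_zeroDimensional {X : Type*} [TopologicalSpace X]
    [MetrizableSpace X] [SeparableSpace X] (hX : AlmostZeroDimensional X)
    (hbasis : ∀ x : X, ∀ U ∈ nhds x,
      ∃ V : Set X, IsOpen V ∧ x ∈ V ∧ V ⊆ U ∧ IsSigmaCSet (frontier V)) :
    ZeroDimensional X := by
  classical
  letI : PseudoMetricSpace X := TopologicalSpace.pseudoMetrizableSpacePseudoMetric X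
  haveI : SecondCountableTopology X := UniformSpace.secondCountable_of_separable X
  intro x U hU
  obtain ⟨V, hVo, hxV, hVU, hσ⟩ := hbasis x U hU
  obtain ⟨f, hfC, hfr⟩ := hσ
  -- the frontier of the open set V is disjoint from V
  have hfrV : ∀ z ∈ frontier V, z ∉ V := by
    intro z hz hzV
    exact hz.2 (by rwa [hVo.interior_eq])
  have hxf : ∀ n, x ∉ f n := by
    intro n hn
    exact hfrV x (hfr ▸ mem_iUnion.2 ⟨n, hn⟩) hxV
  -- clopen sets sB n ⊇ f n avoiding x
  have hsB : ∀ n, ∃ c : Set X, IsClopen c ∧ f n ⊆ c ∧ x ∉ c := by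
    intro n
    obtain ⟨S, hS, hEq⟩ := hfC n
    have hxS : x ∉ ⋂₀ S := hEq ▸ hxf n
    have : ∃ c ∈ S, x ∉ c := by
      by_contra h
      push_neg at h
      exact hxS fun c hc => h c hc
    obtain ⟨c, hcS, hxc⟩ := this
    exact ⟨c, hS c hcS, hEq ▸ sInter_subset_of_mem hcS, hxc⟩
  choose sB hsBcl hsBsup hsBx using hsB
  -- C-set neighborhoods inside V at every point of V, countable cover of V
  have hcov : ∀ y : ↥V, ∃ A : Set X, IsCSet A ∧ A ∈ nhds (y : X) ∧ A ⊆ V :=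
    fun y => hX y V (hVo.mem_nhds y.2)
  choose Ay hAyC hAyn hAyV using hcov
  obtain ⟨T, hTc, hTU⟩ :=
    TopologicalSpace.isOpen_iUnion_countable (fun i : ↥V => interior (Ay i))
      (fun i => isOpen_interior)
  have hxcup : x ∈ ⋃ i : ↥V, interior (Ay i) :=
    mem_iUnion.2 ⟨⟨x, hxV⟩, mem_interior_iff_mem_nhds.2 (hAyn ⟨x, hxV⟩)⟩
  have hTne : T.Nonempty := by
    rw [← hTU] at hxcup
    simp only [mem_iUnion, exists_prop] at hxcup
    obtain ⟨i, hiT, _⟩ := hxcup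
    exact ⟨i, hiT⟩
  obtain ⟨φ, hφ⟩ := hTc.exists_eq_range hTne
  set AA : ℕ → Set X := fun j => Ay (φ j) with hAA
  have hAAC : ∀ j, IsCSet (AA j) := fun j => hAyC (φ j)
  have hAAV : ∀ j, AA j ⊆ V := fun j => hAyV (φ j)
  have hAAcov : ∀ y ∈ V, ∃ j, y ∈ interior (AA j) := by
    intro y hy
    have : y ∈ ⋃ i : ↥V, interior (Ay i) :=
      mem_iUnion.2 ⟨⟨y, hy⟩, mem_interior_iff_mem_nhds.2 (hAyn ⟨y, hy⟩)⟩
    rw [← hTU] at this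
    simp only [mem_iUnion, exists_prop] at this
    obtain ⟨i, hiT, hyi⟩ := this
    have : i ∈ range φ := hφ ▸ hiT
    obtain ⟨j, hj⟩ := this
    exact ⟨j, by simp only [hAA, hj]; exact hyi⟩
  -- clopen separators between the AA j and the boundary pieces f n
  have hsep : ∀ j n : ℕ, ∃ u : Set X, IsClopen u ∧ AA j ⊆ u ∧ Disjoint u (f n) := by
    intro j n
    refine clopen_sep_of_isCSet (hAAC j) (hfC n) ?_
    rw [Set.disjoint_left]
    intro z hzA hzf
    exact hfrV z (hfr ▸ mem_iUnion.2 ⟨n, hzf⟩) (hAAV j hzA)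
  choose u hucl huA huf using fun j => hsep j
  -- the removal sets
  set B : ℕ → Set X := fun n => sB n \ ⋃ j ∈ Finset.range (n + 1), u j n with hB
  have hBcl : ∀ n, IsClopen (B n) :=
    fun n => (hsBcl n).diff (isClopen_biUnion_finset fun j _ => hucl j n)
  have hfB : ∀ n, f n ⊆ B n := by
    intro n z hz
    refine ⟨hsBsup n hz, ?_⟩
    simp only [mem_iUnion, exists_prop, Finset.mem_range]
    rintro ⟨j, _, hzu⟩
    exact (Set.disjoint_left.1 (huf j n)) hzu hz
  have hxB : ∀ n, x ∉ B n := fun n hn => hsBx n hn.1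
  -- the clopen neighborhood
  refine ⟨V \ ⋃ n, B n, ⟨?_, ?_⟩, ⟨hxV, by simpa using hxB⟩, fun z hz => hVU hz.1⟩
  · -- closed
    have hsub : closure (V \ ⋃ n, B n) ⊆ V \ ⋃ n, B n := by
      intro z hz
      have h1 : ∀ n, z ∉ B n := by
        intro n
        have : closure (V \ ⋃ n, B n) ⊆ (B n)ᶜ :=
          closure_minimal (fun w hw => by
            intro hwB
            exact (hw.2) (mem_iUnion.2 ⟨n, hwB⟩)) (hBcl n).compl.isClosed
        exact this hz
      have h2 : z ∈ closure V := closure_mono diff_subset hz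
      have hzV : z ∈ V := by
        by_contra hzV
        have hzfr : z ∈ frontier V := ⟨h2, by rwa [hVo.interior_eq]⟩
        rw [hfr] at hzfr
        obtain ⟨n, hn⟩ := mem_iUnion.1 hzfr
        exact h1 n (hfB n hn)
      exact ⟨hzV, fun hzB => h1 (mem_iUnion.1 hzB).choose (mem_iUnion.1 hzB).choose_spec⟩
    exact isClosed_of_closure_subset hsub
  · -- open
    rw [isOpen_iff_forall_mem_open]
    intro y hy
    obtain ⟨j₀, hyj₀⟩ := hAAcov y hy.1
    refine ⟨interior (AA j₀) ∩ V ∩ ⋂ n ∈ Finset.range j₀, (B n)ᶜ, ?_, ?_, ?_⟩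
    · intro z hz
      refine ⟨hz.1.2, ?_⟩
      intro hzB
      obtain ⟨n, hn⟩ := mem_iUnion.1 hzB
      rcases Nat.lt_or_ge n j₀ with hlt | hge
      · have : z ∈ (B n)ᶜ := by
          have := hz.2
          simp only [mem_iInter, Finset.mem_range] at this
          exact this n hlt
        exact this hn
      · -- n ≥ j₀ : z ∈ AA j₀ ⊆ u j₀ n, which is removed from B n
        have hzu : z ∈ u j₀ n := huA j₀ n (interior_subset hz.1.1)
        have : z ∈ ⋃ j ∈ Finset.range (n + 1), u j n := by
          simp only [mem_iUnion, exists_prop, Finset.mem_range]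
          exact ⟨j₀, Nat.lt_succ_of_le hge, hzu⟩
        exact hn.2 this
    · refine IsOpen.inter (isOpen_interior.inter hVo) ?_
      exact isOpen_biInter_finset fun n _ => (hBcl n).compl.isOpen
    · refine ⟨⟨hyj₀, hy.1⟩, ?_⟩
      simp only [mem_iInter, Finset.mem_range, mem_compl_iff]
      intro n _
      exact fun hnB => hy.2 (mem_iUnion.2 ⟨n, hnB⟩)
end

section
/- In a totally disconnected separable metrizable space, every compact subset is a C-set, and consequently every σ-compact subset is a σC-set. -/
open Set TopologicalSpace

theorem compact_isCSet_of_totallyDisconnected {X : Type*} [TopologicalSpace X]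
    [MetrizableSpace X] [SeparableSpace X]
    (htd : ∀ x : X, IsCSet ({x} : Set X)) :
    (∀ K : Set X, IsCompact K → IsCSet K) ∧
      (∀ K : Set X, IsSigmaCompact K → IsSigmaCSet K) := by
  have main : ∀ K : Set X, IsCompact K → IsCSet K := by
    intro K hK
    refine ⟨{C | IsClopen C ∧ K ⊆ C}, fun s hs => hs.1, ?_⟩
    apply Subset.antisymm
    · intro x hx C hC
      exact hC.2 hx
    · intro y hy
      by_contra hyK
      have h : ∀ x : X, ∃ U : Set X, IsClopen U ∧ (x ∈ K → x ∈ U) ∧ (x ∈ K → y ∉ U) := by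
        intro x
        by_cases hx : x ∈ K
        · obtain ⟨S, hS, hSx⟩ := htd x
          have hyx : y ∉ ({x} : Set X) := by
            simp only [mem_singleton_iff]
            rintro rfl; exact hyK hx
          rw [hSx, mem_sInter] at hyx
          push_neg at hyx
          obtain ⟨s, hsS, hys⟩ := hyx
          have hxs : x ∈ s := by
            have : x ∈ ⋂₀ S := hSx ▸ mem_singleton x
            exact this s hsS
          exact ⟨s, hS s hsS, fun _ => hxs, fun _ => hys⟩
        · exact ⟨∅, isClopen_empty, fun h => absurd h hx, fun h => absurd h hx⟩
      choose U hUc hUmem hUny using h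
      obtain ⟨t, htK, htcov⟩ := hK.elim_nhds_subcover U
        (fun x hx => (hUc x).2.mem_nhds (hUmem x hx))
      have hCclopen : IsClopen (⋃ x ∈ t, U x) :=
        isClopen_biUnion_finset (fun x _ => hUc x)
      have hyC : y ∈ ⋃ x ∈ t, U x := hy _ ⟨hCclopen, htcov⟩
      simp only [mem_iUnion, exists_prop] at hyC
      obtain ⟨x, hxt, hyx⟩ := hyC
      exact hUny x (htK x hxt) hyx
  refine ⟨main, ?_⟩
  rintro K ⟨f, hf, hfK⟩
  exact ⟨f, fun n => main _ (hf n), hfK.symm⟩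
end

section
/- If a space has a one-point connectification, then it is cohesive. -/
open Set TopologicalSpace

theorem cohesive_of_onePoint_connectification {Y : Type*} [TopologicalSpace Y]
    [MetrizableSpace Y] [SeparableSpace Y] [ConnectedSpace Y] (p : Y) :
    Cohesive (↥({p}ᶜ : Set Y)) := by
  letI : MetricSpace Y := TopologicalSpace.metrizableSpaceMetric Y
  intro x
  have hxp : (x : Y) ≠ p := x.2
  have hU : ({p}ᶜ : Set Y) ∈ nhds (x : Y) := isOpen_compl_singleton.mem_nhds hxp
  obtain ⟨V, hVnhds, hVclosed, hVsub⟩ := exists_mem_nhds_isClosed_subset hU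
  refine ⟨Subtype.val ⁻¹' V, continuous_subtype_val.continuousAt.preimage_mem_nhds hVnhds,
    fun A hAU hA => ?_⟩
  set B : Set Y := Subtype.val '' A with hB
  have hBopen : IsOpen B := isOpen_compl_singleton.isOpenMap_subtype_val A hA.isOpen
  obtain ⟨C, hCclosed, hAC⟩ := isClosed_induced_iff.mp hA.isClosed
  have hBV : B ⊆ V := by
    rintro y ⟨a, ha, rfl⟩
    exact hAU ha
  have hBC : B ⊆ C := by
    rintro y ⟨a, ha, rfl⟩
    rw [← hAC] at ha
    exact ha
  have hBeq : B = C ∩ ({p}ᶜ : Set Y) := by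
    rw [hB, ← hAC, Subtype.image_preimage_coe]
    exact Set.inter_comm _ _
  have hBclosed : IsClosed B := by
    rw [← closure_eq_iff_isClosed]
    refine subset_antisymm ?_ subset_closure
    have h1 : closure B ⊆ C := hCclosed.closure_subset_iff.mpr hBC
    have h2 : closure B ⊆ V := hVclosed.closure_subset_iff.mpr hBV
    intro y hy
    rw [hBeq]
    exact ⟨h1 hy, hVsub (h2 hy)⟩
  rcases isClopen_iff.mp ⟨hBclosed, hBopen⟩ with h | h
  · exact Set.image_eq_empty.mp h
  · exfalso
    have : p ∈ B := h ▸ Set.mem_univ p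
    rcases this with ⟨a, _, ha⟩
    exact a.2 ha
end

section
/- Every open subspace of a cohesive space is cohesive. -/
open Set TopologicalSpace

theorem cohesive_of_isOpen_subset {X : Type*} [TopologicalSpace X]
    [MetrizableSpace X] [SeparableSpace X] (hX : Cohesive X)
    {U : Set X} (hU : IsOpen U) : Cohesive ↥U := by
  letI := TopologicalSpace.metrizableSpaceMetric X
  intro x
  obtain ⟨W, hW, hWc⟩ := hX ↑x
  have hUW : U ∩ W ∈ nhds (↑x : X) := Filter.inter_mem (hU.mem_nhds x.2) hW
  obtain ⟨V, hV, hVc, hVsub⟩ := exists_mem_nhds_isClosed_subset hUW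
  refine ⟨Subtype.val ⁻¹' V, continuous_subtype_val.continuousAt.preimage_mem_nhds hV,
    fun A hAsub hA => ?_⟩
  set B : Set X := Subtype.val '' A with hB
  have hBV : B ⊆ V := by
    rintro y ⟨a, ha, rfl⟩
    exact hAsub ha
  have hBopen : IsOpen B := hU.isOpenMap_subtype_val _ hA.2
  obtain ⟨C, hC, hAC⟩ := isClosed_induced_iff.mp hA.1
  have hBeq : B = C ∩ U := by
    rw [hB, ← hAC, Subtype.image_preimage_coe, inter_comm]
  have hBclosed : IsClosed B := by
    apply isClosed_of_closure_subset
    have hBC : B ⊆ C := by rw [hBeq]; exact inter_subset_left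
    have h1 : closure B ⊆ C := hC.closure_subset_iff.2 hBC
    have h2 : closure B ⊆ U :=
      (closure_minimal hBV hVc).trans (hVsub.trans inter_subset_left)
    exact (subset_inter h1 h2).trans hBeq.superset
  have hBempty : B = ∅ :=
    hWc B (hBV.trans (hVsub.trans inter_subset_right)) ⟨hBclosed, hBopen⟩
  exact Set.image_eq_empty.mp hBempty
end

section
/- Every non-empty open subset of a connected separable metrizable space with more than one point is cohesive. -/
open Set TopologicalSpace

theorem cohesive_open_subset_of_connected {Y : Type*} [TopologicalSpace Y]
    [MetrizableSpace Y] [SeparableSpace Y] [ConnectedSpace Y] [Nontrivial Y]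
    {U : Set Y} (hU : IsOpen U) (hne : U.Nonempty) : Cohesive ↥U := by
  letI : MetricSpace Y := TopologicalSpace.metrizableSpaceMetric Y
  intro x
  obtain ⟨y, hy⟩ := exists_ne (x : Y)
  obtain ⟨ε, hε, hball⟩ := Metric.isOpen_iff.mp hU x x.2
  have hd : 0 < dist y (x : Y) := dist_pos.mpr hy
  set r := min (ε / 2) (dist y (x : Y) / 2) with hr
  have hr0 : 0 < r := lt_min (by linarith) (by linarith)
  have hrε : r < ε := lt_of_le_of_lt (min_le_left _ _) (by linarith)
  have hcb : Metric.closedBall (x : Y) r ⊆ U := fun z hz =>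
    hball (lt_of_le_of_lt hz hrε)
  refine ⟨Subtype.val ⁻¹' Metric.ball (x : Y) r,
    IsOpen.mem_nhds (Metric.isOpen_ball.preimage continuous_subtype_val)
      (Metric.mem_ball_self hr0), ?_⟩
  intro A hA hclop
  by_contra hAne
  rw [← ne_eq, ← nonempty_iff_ne_empty] at hAne
  set B := Subtype.val '' A with hB
  have hBne : B.Nonempty := hAne.image _
  have hBopen : IsOpen B := hU.isOpenMap_subtype_val A hclop.isOpen
  have hBsub : B ⊆ Metric.ball (x : Y) r := by
    rintro _ ⟨a, ha, rfl⟩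
    exact hA ha
  have hBclosed : IsClosed B := by
    obtain ⟨t, ht, htA⟩ := isClosed_induced_iff.mp hclop.isClosed
    have hBt : B = t ∩ U := by
      rw [hB, ← htA, Subtype.image_preimage_coe, inter_comm]
    refine isClosed_of_closure_subset ?_
    rw [hBt]
    intro z hz
    have hsubcb : closure (t ∩ U) ⊆ Metric.closedBall (x : Y) r :=
      closure_minimal ((hBt ▸ hBsub).trans Metric.ball_subset_closedBall)
        Metric.isClosed_closedBall
    refine ⟨?_, hcb (hsubcb hz)⟩
    have : closure (t ∩ U) ⊆ t := closure_minimal inter_subset_left ht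
    exact this hz
  rcases isClopen_iff.mp ⟨hBclosed, hBopen⟩ with h | h
  · exact hBne.ne_empty h
  · have : y ∈ B := h ▸ mem_univ y
    have := hBsub this
    rw [Metric.mem_ball] at this
    have : r ≤ dist y (x : Y) / 2 := min_le_right _ _
    linarith [Metric.mem_ball.mp (hBsub (h ▸ mem_univ y))]
end

section
/- If a connected separable metrizable space X contains a non-empty open almost zero-dimensional subspace O with X \ O non-empty, then X is not σ-connected, i.e., X can be written as the union of countably many pairwise disjoint non-empty closed subsets. -/
open Set TopologicalSpace

/-! Each point of `O` has a C-set neighbourhood inside a closed subset of `X` contained in `O`;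
countably many of them cover `O`. In a second countable space the complement of a C-set is a
countable disjoint union of clopen sets, so cutting each of these C-sets, minus the earlier ones,
along those partitions splits `O` into countably many disjoint pieces that are closed in `X`.
Since the connected space `X` has no proper non-empty clopen subset, `O` is not closed, so
infinitely many pieces are non-empty; together with `Oᶜ` they partition `X`. -/

section CSet

variable {Y : Type*} [TopologicalSpace Y]

theorem IsCSet.isClosed {A : Set Y} (hA : IsCSet A) : IsClosed A := by
  obtain ⟨S, hS, rfl⟩ := hA
  exact isClosed_sInter fun s hs => (hS s hs).isClosed

theorem IsCSet.exists_iInter_eq [SecondCountableTopology Y] {A : Set Y} (hA : IsCSet A) :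
    ∃ D : ℕ → Set Y, (∀ n, IsClopen (D n)) ∧ A = ⋂ n, D n := by
  obtain ⟨S, hS, rfl⟩ := hA
  obtain ⟨T, hTc, hTS, hTU⟩ := isOpen_sUnion_countable (compl '' S)
    (by rintro _ ⟨s, hs, rfl⟩; exact (hS s hs).compl.isOpen)
  -- `∅` is added so that `T` can be enumerated even when it is empty.
  obtain ⟨f, hf⟩ := (hTc.insert ∅).exists_eq_range (insert_nonempty _ _)
  refine ⟨fun n => (f n)ᶜ, fun n => ?_, ?_⟩
  · rcases (hf ▸ mem_range_self n : f n ∈ insert ∅ T) with h | h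
    · simp only [h, compl_empty, isClopen_univ]
    · obtain ⟨s, hs, hsf⟩ := hTS h
      simpa [← hsf] using hS s hs
  · rw [← compl_inj_iff, compl_iInter, compl_sInter, ← hTU]
    simp only [compl_compl, ← sUnion_range, ← hf, sUnion_insert, empty_union]

theorem IsCSet.exists_clopen_partition_compl [SecondCountableTopology Y] {A : Set Y}
    (hA : IsCSet A) :
    ∃ E : ℕ → Set Y, (∀ n, IsClopen (E n)) ∧ Pairwise (Function.onFun Disjoint E) ∧
      ⋃ n, E n = Aᶜ := by
  obtain ⟨D, hD, rfl⟩ := hA.exists_iInter_eq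
  refine ⟨disjointed fun n => (D n)ᶜ, fun n => ?_, disjoint_disjointed _, ?_⟩
  · exact disjointedRec (fun _ i ht => ht.diff (hD i).compl) (hD n).compl
  · rw [iUnion_disjointed, compl_iInter]

theorem AlmostZeroDimensional.exists_isCSet_cover [SecondCountableTopology Y] [Nonempty Y]
    (h : AlmostZeroDimensional Y) {U : Y → Set Y} (hU : ∀ y, U y ∈ nhds y) :
    ∃ A : ℕ → Set Y, (∀ n, IsCSet (A n)) ∧ (∀ n, ∃ y, A n ⊆ U y) ∧
      ⋃ n, A n = univ := by
  choose C hC hCn hCU using fun y => h y (U y) (hU y)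
  obtain ⟨s, hs, hcov⟩ := _root_.countable_cover_nhds hCn
  have hne : s.Nonempty := by
    by_contra! hempty
    simp only [hempty, mem_empty_iff_false, iUnion_of_empty, iUnion_empty] at hcov
    exact empty_ne_univ hcov
  obtain ⟨σ, rfl⟩ := hs.exists_eq_range hne
  rw [biUnion_range] at hcov
  exact ⟨fun n => C (σ n), fun n => hC _, fun n => ⟨σ n, hCU _⟩, hcov⟩

end CSet

section FirstCoverPiece

variable {Y : Type*} (A : ℕ → Set Y) (E : ℕ → ℕ → Set Y)

/-- When each `E i` partitions `(A i)ᶜ`, the points of `firstCoverPiece A E ⟨j, t⟩` are those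
whose first `A`-index is `j` and which lie in the cell `E i (t i)` for every `i < j`. -/
def firstCoverPiece (p : Σ j, Fin j → ℕ) : Set Y :=
  A p.1 ∩ ⋂ i : Fin p.1, E i (p.2 i)

variable {A E}

theorem pairwise_disjoint_firstCoverPiece (hE : ∀ i, Pairwise (Function.onFun Disjoint (E i)))
    (hAE : ∀ i, ⋃ m, E i m = (A i)ᶜ) :
    Pairwise (Function.onFun Disjoint (firstCoverPiece A E)) := by
  have hsubE : ∀ p (i : Fin p.1), firstCoverPiece A E p ⊆ E i (p.2 i) :=
    fun p i x hx => mem_iInter.mp hx.2 i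
  have hlt : ∀ {j j'} (t : Fin j → ℕ) (t' : Fin j' → ℕ), j < j' →
      Disjoint (firstCoverPiece A E ⟨j, t⟩) (firstCoverPiece A E ⟨j', t'⟩) := by
    intro j j' t t' h
    have hdisj : Disjoint (A j) (E j (t' ⟨j, h⟩)) :=
      disjoint_compl_right.mono_right ((subset_iUnion _ _).trans (hAE j).subset)
    exact hdisj.mono inter_subset_left (hsubE ⟨j', t'⟩ ⟨j, h⟩)
  rintro ⟨j, t⟩ ⟨j', t'⟩ hne
  rcases lt_trichotomy j j' with h | rfl | h
  · exact hlt t t' h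
  · obtain ⟨i, hi⟩ := Function.ne_iff.mp fun htt' : t = t' => hne (by rw [htt'])
    exact (hE i hi).mono (hsubE ⟨j, t⟩ i) (hsubE ⟨j, t'⟩ i)
  · exact (hlt t' t h).symm

theorem iUnion_firstCoverPiece (hAE : ∀ i, ⋃ m, E i m = (A i)ᶜ) :
    ⋃ p, firstCoverPiece A E p = ⋃ n, A n := by
  classical
  refine Subset.antisymm (iUnion_subset fun p => inter_subset_left.trans (subset_iUnion _ _)) ?_
  intro x hx
  have hex : ∃ n, x ∈ A n := mem_iUnion.mp hx
  have hcell : ∀ i : Fin (Nat.find hex), ∃ m, x ∈ E i m := fun i =>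
    mem_iUnion.mp ((hAE i).symm ▸ Nat.find_min hex i.2 : x ∈ ⋃ m, E i m)
  choose t ht using hcell
  exact mem_iUnion.mpr ⟨⟨Nat.find hex, t⟩, Nat.find_spec hex, mem_iInter.mpr ht⟩

end FirstCoverPiece

theorem exists_pairwise_disjoint_isClosed_refinement {Y : Type*} [TopologicalSpace Y]
    [SecondCountableTopology Y] {A : ℕ → Set Y} (hA : ∀ n, IsCSet (A n)) :
    ∃ Q : (Σ j, Fin j → ℕ) → Set Y, (∀ p, IsClosed (Q p)) ∧
      Pairwise (Function.onFun Disjoint Q) ∧ (∀ p, Q p ⊆ A p.1) ∧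
      ⋃ p, Q p = ⋃ n, A n := by
  choose E hEc hEd hEA using fun n => (hA n).exists_clopen_partition_compl
  refine ⟨firstCoverPiece A E, fun p => ?_, pairwise_disjoint_firstCoverPiece hEd hEA,
    fun p => inter_subset_left, iUnion_firstCoverPiece hEA⟩
  exact (hA p.1).isClosed.inter (isClosed_iInter fun i => (hEc _ _).isClosed)

theorem isClosed_image_val_of_subset_isClosed {X : Type*} [TopologicalSpace X] {O V : Set X}
    {B : Set O} (hB : IsClosed B) (hV : IsClosed V) (hVO : V ⊆ O) (hBV : (↑) '' B ⊆ V) :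
    IsClosed (((↑) : O → X) '' B) := by
  obtain ⟨C, hC, rfl⟩ := isClosed_induced_iff.mp hB
  rw [image_preimage_eq_inter_range, Subtype.range_coe] at hBV ⊢
  have : C ∩ O = C ∩ V :=
    Subset.antisymm (subset_inter inter_subset_left hBV) (inter_subset_inter_right C hVO)
  exact this ▸ hC.inter hV

theorem exists_nat_partition_of_countable {X : Type*} [TopologicalSpace X] {ι : Type*}
    [Countable ι] {G : ι → Set X} (hG : ∀ i, IsClosed (G i))
    (hGd : Pairwise (Function.onFun Disjoint G)) (hGU : ⋃ i, G i = univ)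
    (hinf : {i | (G i).Nonempty}.Infinite) :
    ∃ F : ℕ → Set X, (∀ n, IsClosed (F n)) ∧ (∀ n, (F n).Nonempty) ∧
      Pairwise (Function.onFun Disjoint F) ∧ (⋃ n, F n) = univ := by
  have : Infinite {i | (G i).Nonempty} := hinf.to_subtype
  obtain ⟨e⟩ : Nonempty (ℕ ≃ {i | (G i).Nonempty}) := nonempty_equiv_of_countable
  refine ⟨fun n => G (e n), fun n => hG _, fun n => (e n).2,
    fun m n hmn => hGd fun h => hmn (e.injective (Subtype.ext h)), ?_⟩
  refine eq_univ_of_forall fun x => ?_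
  obtain ⟨i, hi⟩ := mem_iUnion.mp (hGU ▸ mem_univ x)
  exact mem_iUnion.mpr ⟨e.symm ⟨i, x, hi⟩, by simpa using hi⟩

theorem exists_nat_partition_of_isOpen {X : Type*} [TopologicalSpace X] [ConnectedSpace X]
    {ι : Type*} [Countable ι] {O : Set X} (hO : IsOpen O) (hOne : O.Nonempty)
    (hOc : Oᶜ.Nonempty) {G : ι → Set X} (hG : ∀ i, IsClosed (G i))
    (hGd : Pairwise (Function.onFun Disjoint G)) (hGU : ⋃ i, G i = O) :
    ∃ F : ℕ → Set X, (∀ n, IsClosed (F n)) ∧ (∀ n, (F n).Nonempty) ∧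
      Pairwise (Function.onFun Disjoint F) ∧ (⋃ n, F n) = univ := by
  have hinf : {i | (G i).Nonempty}.Infinite := by
    intro hfin
    have hOeq : O = ⋃ i ∈ {i | (G i).Nonempty}, G i := by
      rw [← hGU]
      refine Subset.antisymm (fun x hx => ?_) (iUnion₂_subset fun i _ => subset_iUnion G i)
      obtain ⟨i, hi⟩ := mem_iUnion.mp hx
      exact mem_biUnion ⟨x, hi⟩ hi
    have hOclosed : IsClosed O := hOeq ▸ hfin.isClosed_biUnion fun i _ => hG i
    rcases isClopen_iff.mp ⟨hOclosed, hO⟩ with rfl | rfl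
    · exact not_nonempty_empty hOne
    · simp at hOc
  refine exists_nat_partition_of_countable (G := fun o : Option ι => o.elim Oᶜ G)
    (by rintro (_ | i); exacts [hO.isClosed_compl, hG i]) ?_ ?_ ?_
  · have hGO : ∀ i, Disjoint Oᶜ (G i) := fun i =>
      disjoint_compl_left.mono_right (hGU ▸ subset_iUnion G i)
    rintro (_ | i) (_ | j) hij
    exacts [absurd rfl hij, hGO j, (hGO i).symm, hGd fun h => hij (congrArg some h)]
  · simp only [iUnion_option, Option.elim_none, Option.elim_some, hGU, compl_union_self]
  · refine (hinf.image (Option.some_injective ι).injOn).mono ?_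
    rintro _ ⟨i, hi, rfl⟩
    exact hi

theorem not_sigmaConnected_of_open_azd {X : Type*} [TopologicalSpace X]
    [MetrizableSpace X] [SeparableSpace X] [ConnectedSpace X]
    {O : Set X} (hO : IsOpen O) (hOne : O.Nonempty) (hOc : Oᶜ.Nonempty)
    (hazd : AlmostZeroDimensional ↥O) :
    ∃ F : ℕ → Set X, (∀ n, IsClosed (F n)) ∧ (∀ n, (F n).Nonempty) ∧
      Pairwise (Function.onFun Disjoint F) ∧ (⋃ n, F n) = univ := by
  let := metrizableSpaceMetric X
  have : SecondCountableTopology X := UniformSpace.secondCountable_of_separable X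
  have : Nonempty O := hOne.to_subtype
  choose V hVn hVc hVO using fun y : O => exists_mem_nhds_isClosed_subset (hO.mem_nhds y.2)
  obtain ⟨A, hAC, hAV, hAU⟩ := hazd.exists_isCSet_cover fun y =>
    continuousAt_subtype_val.preimage_mem_nhds (hVn y)
  obtain ⟨Q, hQc, hQd, hQA, hQU⟩ := exists_pairwise_disjoint_isClosed_refinement hAC
  refine exists_nat_partition_of_isOpen hO hOne hOc (G := fun p => (↑) '' Q p) (fun p => ?_)
    (fun p q hpq => disjoint_image_of_injective Subtype.val_injective (hQd hpq)) ?_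
  · obtain ⟨y, hy⟩ := hAV p.1
    exact isClosed_image_val_of_subset_isClosed (hQc p) (hVc y) (hVO y)
      ((image_mono ((hQA p).trans hy)).trans (image_preimage_subset _ _))
  · rw [← image_iUnion, hQU, hAU, image_univ, Subtype.range_coe]
end

section
/- Every dense G_δ subset X of C × ℝ (C the Cantor set) that is totally disconnected is zero-dimensional at some point: there exists x ∈ X such that X has a neighborhood basis at x consisting of clopen subsets of X. In particular, no dense totally disconnected G_δ subset of C × ℝ is nowhere zero-dimensional. -/
open Set TopologicalSpace

/-! If `X` were nowhere zero-dimensional, Baire category in `X` (a dense `G_δ`, hence Baire)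
would give a nonempty open `G ⊆ X` and `δ > 0` such that no nonempty clopen subset of `X` inside
`G` has diameter `< δ`. But every nonempty open subset of `X` contains a nonempty clopen subset
of `X`, hence small ones. Indeed, Baire category in `C × ℝ³` gives three points `(c, t₁)`,
`(c, t₂)`, `(c, t₃)` of `X` with `t₁ < t₂ < t₃` inside a given box `U × (a, b)`. Take a clopen
`S ∋ (c, t₂)` of `X` missing the other two; its closure in `C × ℝ` misses `(c, t₁)` and
`(c, t₃)`, so for a small clopen `K ∋ c` of `C` it misses `K × {t₁, t₃}`, and then
`S ∩ (K × (t₁, t₃))` is clopen in `X`. -/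

open Metric Topology

def ZeroDimensionalAt {P : Type*} [TopologicalSpace P] (x : P) : Prop :=
  ∀ U ∈ 𝓝 x, ∃ V : Set P, IsClopen V ∧ x ∈ V ∧ V ⊆ U

theorem exists_zeroDimensionalAt_of_forall_isOpen_exists_isClopen {P : Type*} [PseudoMetricSpace P]
    [BaireSpace P] [Nonempty P]
    (h : ∀ G : Set P, IsOpen G → G.Nonempty → ∃ V, IsClopen V ∧ V.Nonempty ∧ V ⊆ G) :
    ∃ x : P, ZeroDimensionalAt x := by
  by_contra! hP
  set A : ℕ → Set P := fun n ↦
    {a | ∀ V, IsClopen V → a ∈ V → ¬ V ⊆ ball a (1 / (n + 1))}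
  have hA : ⋃ n, closure (A n) = univ := by
    refine eq_univ_of_forall fun x ↦ ?_
    obtain ⟨U, hU, hxU⟩ : ∃ U ∈ 𝓝 x, ∀ V, IsClopen V → x ∈ V → ¬ V ⊆ U := by
      simpa [ZeroDimensionalAt] using hP x
    obtain ⟨ε, hε, hεU⟩ := Metric.mem_nhds_iff.mp hU
    obtain ⟨n, hn⟩ := exists_nat_one_div_lt hε
    exact mem_iUnion.mpr ⟨n, subset_closure fun V hV hxV hVx ↦
      hxU V hV hxV ((hVx.trans (ball_subset_ball hn.le)).trans hεU)⟩
  obtain ⟨n, p, hp⟩ := nonempty_interior_of_iUnion_of_closed (fun _ ↦ isClosed_closure) hA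
  set δ : ℝ := 1 / (n + 1)
  obtain ⟨V, hV, ⟨v, hv⟩, hVsub⟩ := h (interior (closure (A n)) ∩ ball p (δ / 2))
    (isOpen_interior.inter isOpen_ball) ⟨p, hp, mem_ball_self (by positivity)⟩
  obtain ⟨a, haV, haA⟩ : (V ∩ A n).Nonempty :=
    mem_closure_iff.mp (interior_subset (hVsub hv).1) V hV.isOpen hv
  refine haA V hV haV fun y hy ↦ ?_
  calc dist y a ≤ dist y p + dist a p := dist_triangle_right y a p
    _ < δ / 2 + δ / 2 := add_lt_add (hVsub hy).2 (hVsub haV).2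
    _ = δ := add_halves δ

theorem exists_isClopen_mem_subset_prod_Ioo {P Y Z : Type*} [TopologicalSpace P]
    [TopologicalSpace Y] [TopologicalSpace Z] [LinearOrder Z] [OrderClosedTopology Z]
    (hY : IsTopologicalBasis {s : Set Y | IsClopen s}) {f : P → Y × Z} (hf : Continuous f)
    {S : Set P} (hS : IsClopen S) {x : P} (hx : x ∈ S) {s₁ s₂ : Z}
    (hs₁ : s₁ < (f x).2) (hs₂ : (f x).2 < s₂)
    (h₁ : ((f x).1, s₁) ∉ closure (f '' S)) (h₂ : ((f x).1, s₂) ∉ closure (f '' S))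
    {U : Set Y} (hU : U ∈ 𝓝 (f x).1) :
    ∃ V, IsClopen V ∧ x ∈ V ∧ V ⊆ S ∩ f ⁻¹' (U ×ˢ Ioo s₁ s₂) := by
  set F := closure (f '' S)
  have hrow : ∀ s, IsOpen {y | (y, s) ∉ F} := fun s ↦
    isClosed_closure.isOpen_compl.preimage (by fun_prop)
  obtain ⟨K, hK, hxK, hKsub⟩ := hY.mem_nhds_iff.mp
    (Filter.inter_mem hU (((hrow s₁).inter (hrow s₂)).mem_nhds ⟨h₁, h₂⟩))
  have hKF : ∀ p ∈ S, (f p).1 ∈ K → (f p).2 ≠ s₁ ∧ (f p).2 ≠ s₂ := by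
    intro p hp hpK
    have hpF : f p ∈ F := subset_closure (mem_image_of_mem f hp)
    exact ⟨fun h ↦ (hKsub hpK).2.1 (h ▸ hpF), fun h ↦ (hKsub hpK).2.2 (h ▸ hpF)⟩
  have hIcc : S ∩ f ⁻¹' (K ×ˢ Ioo s₁ s₂) = S ∩ f ⁻¹' (K ×ˢ Icc s₁ s₂) := by
    ext p
    simp only [mem_inter_iff, mem_preimage, mem_prod, mem_Ioo, mem_Icc]
    constructor
    · rintro ⟨hp, hpK, h₁, h₂⟩
      exact ⟨hp, hpK, h₁.le, h₂.le⟩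
    · rintro ⟨hp, hpK, h₁, h₂⟩
      obtain ⟨hne₁, hne₂⟩ := hKF p hp hpK
      exact ⟨hp, hpK, h₁.lt_of_ne hne₁.symm, h₂.lt_of_ne hne₂⟩
  refine ⟨S ∩ f ⁻¹' (K ×ˢ Ioo s₁ s₂), ⟨?_, ?_⟩, ⟨hx, hxK, hs₁, hs₂⟩, ?_⟩
  · rw [hIcc]
    exact hS.isClosed.inter ((hK.isClosed.prod isClosed_Icc).preimage hf)
  · exact hS.isOpen.inter ((hK.isOpen.prod isOpen_Ioo).preimage hf)
  · exact inter_subset_inter_right S (preimage_mono (prod_mono (fun y hy ↦ (hKsub hy).1) le_rfl))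

theorem dense_setOf_forall_mk_mem {Y Z ι : Type*} [TopologicalSpace Y] [TopologicalSpace Z]
    [Countable ι] [BaireSpace (Y × (ι → Z))] {X : Set (Y × Z)} (hd : Dense X) (hg : IsGδ X) :
    Dense {q : Y × (ι → Z) | ∀ i, (q.1, q.2 i) ∈ X} := by
  have hfib : ∀ i, Continuous (Prod.map id (Function.eval i) : Y × (ι → Z) → Y × Z) ∧
      IsOpenMap (Prod.map id (Function.eval i) : Y × (ι → Z) → Y × Z) := fun i ↦
    ⟨by fun_prop, IsOpenMap.id.prodMap (isOpenMap_eval i)⟩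
  convert dense_iInter_of_Gδ (fun i ↦ hg.preimage (hfib i).1) fun i ↦ hd.preimage (hfib i).2
  ext q
  simp only [mem_iInter, mem_preimage]
  rfl

theorem totallySeparatedSpace_of_isCSet_singleton {P : Type*} [TopologicalSpace P]
    (h : ∀ x : P, IsCSet ({x} : Set P)) : TotallySeparatedSpace P := by
  refine totallySeparatedSpace_iff_exists_isClopen.mpr fun x y hxy ↦ ?_
  obtain ⟨S, hS, hxS⟩ := h x
  have hy : y ∉ ⋂₀ S := hxS ▸ Ne.symm hxy
  have hx : x ∈ ⋂₀ S := hxS ▸ rfl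
  obtain ⟨s, hs, hys⟩ := not_forall₂.mp (mt mem_sInter.mpr hy)
  exact ⟨s, hS s hs, mem_sInter.mp hx s hs, hys⟩

theorem exists_isClopen_nonempty_subset_of_dense_isGδ {Y : Type*} [TopologicalSpace Y]
    (hY : IsTopologicalBasis {s : Set Y | IsClopen s}) [BaireSpace (Y × (Fin 3 → ℝ))]
    {X : Set (Y × ℝ)} (hd : Dense X) (hg : IsGδ X) [TotallySeparatedSpace X]
    {G : Set X} (hG : IsOpen G) (hGne : G.Nonempty) :
    ∃ V, IsClopen V ∧ V.Nonempty ∧ V ⊆ G := by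
  obtain ⟨O, hO, rfl⟩ := isOpen_induced_iff.mp hG
  obtain ⟨⟨⟨y₀, t₀⟩, _⟩, hpO⟩ := hGne
  obtain ⟨U, I, hU, hI, hy₀, ht₀, hUI⟩ := isOpen_prod_iff.mp hO y₀ t₀ hpO
  obtain ⟨a, b, ⟨hat₀, ht₀b⟩, habI⟩ := mem_nhds_iff_exists_Ioo_subset.mp (hI.mem_nhds ht₀)
  set W : Set (Y × (Fin 3 → ℝ)) :=
    U ×ˢ {z | a < z 0 ∧ z 0 < z 1 ∧ z 1 < z 2 ∧ z 2 < b}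
  have hW : IsOpen W := hU.prod <|
    (isOpen_lt continuous_const (continuous_apply 0)).inter <|
    (isOpen_lt (continuous_apply 0) (continuous_apply 1)).inter <|
    (isOpen_lt (continuous_apply 1) (continuous_apply 2)).inter
    (isOpen_lt (continuous_apply 2) continuous_const)
  have hWne : W.Nonempty := ⟨(y₀, ![(a + t₀) / 2, t₀, (t₀ + b) / 2]), hy₀, by
    refine ⟨?_, ?_, ?_, ?_⟩ <;> simp <;> linarith⟩
  obtain ⟨⟨c, z⟩, ⟨hc, hz0, hz01, hz12, hz2⟩, hzX⟩ :=
    (dense_setOf_forall_mk_mem hd hg).inter_open_nonempty W hW hWne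
  set x : Fin 3 → X := fun i ↦ ⟨(c, z i), hzX i⟩
  obtain ⟨S₀, hS₀, hx₁S₀, hx₀S₀⟩ := exists_isClopen_of_totally_separated
    (show x 1 ≠ x 0 from fun h ↦ hz01.ne' (congrArg (fun p : X ↦ p.1.2) h))
  obtain ⟨S₂, hS₂, hx₁S₂, hx₂S₂⟩ := exists_isClopen_of_totally_separated
    (show x 1 ≠ x 2 from fun h ↦ hz12.ne (congrArg (fun p : X ↦ p.1.2) h))
  have hS : IsClopen (S₀ ∩ S₂) := hS₀.inter hS₂
  have hout : ∀ i, x i ∉ S₀ ∩ S₂ → (c, z i) ∉ closure (Subtype.val '' (S₀ ∩ S₂)) := by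
    intro i hi h
    rw [← hS.isClosed.closure_eq, IsInducing.subtypeVal.closure_eq_preimage_closure_image] at hi
    exact hi h
  obtain ⟨V, hV, hxV, hVsub⟩ := exists_isClopen_mem_subset_prod_Ioo hY continuous_subtype_val hS
    (x := x 1) ⟨hx₁S₀, hx₁S₂⟩ hz01 hz12 (hout 0 fun h ↦ hx₀S₀ h.1) (hout 2 fun h ↦ hx₂S₂ h.2)
    (hU.mem_nhds hc)
  refine ⟨V, hV, ⟨x 1, hxV⟩, fun p hp ↦ hUI ?_⟩
  obtain ⟨-, hpU, hp₁, hp₂⟩ := hVsub hp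
  exact ⟨hpU, habI ⟨hz0.trans hp₁, hp₂.trans hz2⟩⟩

instance : CompactSpace cantorSet := isCompact_iff_compactSpace.mp isCompact_cantorSet

instance : TotallyDisconnectedSpace cantorSet :=
  cantorSetHomeomorphNatToBool.symm.totallyDisconnectedSpace

instance : Nonempty cantorSet := ⟨⟨0, zero_mem_cantorSet⟩⟩

theorem dense_td_Gdelta_in_cantor_times_real_zeroDim_somewhere
    {X : Set (↥cantorSet × ℝ)} (hd : Dense X) (hg : IsGδ X)
    (htd : ∀ x : ↥X, IsCSet ({x} : Set ↥X)) :
    ∃ x : ↥X, ∀ U ∈ nhds x, ∃ V : Set ↥X, IsClopen V ∧ x ∈ V ∧ V ⊆ U := by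
  have := totallySeparatedSpace_of_isCSet_singleton htd
  have : BaireSpace X := hg.baireSpace_of_dense hd
  have : Nonempty X := hd.nonempty.to_subtype
  exact exists_zeroDimensionalAt_of_forall_isOpen_exists_isClopen fun _ hG hGne ↦
    exists_isClopen_nonempty_subset_of_dense_isGδ isTopologicalBasis_isClopen hd hg hG hGne
end

section
/- Let C be the Cantor set, let φ : C → [0,1] be upper semi-continuous, let G = {(x, φ(x)) : φ(x) > 0} ⊆ C × (0,1], and let ∇ : [0,1]² → [0,1]² be defined by ∇(x,y) = (xy + (1-y)/2, y). If every non-empty clopen subset A of G satisfies inf π₁(A) = 0 (where π₁ is the second coordinate projection), then ∇(G) ∪ {(1/2, 0)} is connected. -/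
open Set TopologicalSpace

lemma nabla_key (G : Set (ℝ × ℝ))
    (hG2 : ∀ g ∈ G, 0 < g.2 ∧ g.1 ∈ Icc (0:ℝ) 1)
    (hinf : ∀ A : Set ↥G, IsClopen A → A.Nonempty →
      sInf ((fun a : ↥G => (a : ℝ × ℝ).2) '' A) = 0)
    (u v : Set (ℝ × ℝ)) (hu : IsOpen u) (hv : IsOpen v)
    (hsub : ((fun p : ℝ × ℝ => (p.1 * p.2 + (1 - p.2) / 2, p.2)) '' G ∪
        {((1 / 2 : ℝ), (0 : ℝ))}) ⊆ u ∪ v)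
    (hpu : ((1 / 2 : ℝ), (0 : ℝ)) ∈ u)
    (hdis : ((fun p : ℝ × ℝ => (p.1 * p.2 + (1 - p.2) / 2, p.2)) '' G ∪
        {((1 / 2 : ℝ), (0 : ℝ))}) ∩ (u ∩ v) = ∅)
    (hvne : (((fun p : ℝ × ℝ => (p.1 * p.2 + (1 - p.2) / 2, p.2)) '' G ∪
        {((1 / 2 : ℝ), (0 : ℝ))}) ∩ v).Nonempty) : False := by
  set F : ℝ × ℝ → ℝ × ℝ := fun p => (p.1 * p.2 + (1 - p.2) / 2, p.2) with hF
  set p0 : ℝ × ℝ := ((1/2 : ℝ), (0 : ℝ)) with hp0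
  set Y : Set (ℝ × ℝ) := F '' G ∪ {p0} with hY
  have hp0v : p0 ∉ v := fun h => by
    have : p0 ∈ Y ∩ (u ∩ v) := ⟨Or.inr rfl, hpu, h⟩
    simp [hdis] at this
  have hFcont : Continuous fun g : ↥G => F (g : ℝ × ℝ) := by fun_prop
  set A : Set ↥G := {g : ↥G | F (g : ℝ × ℝ) ∈ v} with hA
  have hmemY : ∀ g : ↥G, F (g : ℝ × ℝ) ∈ Y := fun g => Or.inl ⟨g, g.2, rfl⟩
  have hiff : ∀ g : ↥G, F (g : ℝ × ℝ) ∈ v ↔ F (g : ℝ × ℝ) ∉ u := by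
    intro g
    constructor
    · intro hgv hgu
      have : F (g : ℝ × ℝ) ∈ Y ∩ (u ∩ v) := ⟨hmemY g, hgu, hgv⟩
      simp [hdis] at this
    · intro hgu
      rcases hsub (hmemY g) with h | h
      · exact absurd h hgu
      · exact h
  have hclopen : IsClopen A := by
    constructor
    · have : Aᶜ = (fun g : ↥G => F (g : ℝ × ℝ)) ⁻¹' u := by
        ext g
        simp only [hA, mem_compl_iff, mem_setOf_eq, mem_preimage]
        rw [hiff g]
        exact not_not
      rw [← isOpen_compl_iff, this]
      exact hu.preimage hFcont
    · exact hv.preimage hFcont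
  have hAne : A.Nonempty := by
    obtain ⟨q, hqY, hqv⟩ := hvne
    rcases hqY with ⟨g, hg, rfl⟩ | hq
    · exact ⟨⟨g, hg⟩, hqv⟩
    · exact absurd (hq ▸ hqv) hp0v
  have h0 := hinf A hclopen hAne
  obtain ⟨ε, hε, hball⟩ := Metric.isOpen_iff.mp hu p0 hpu
  have hTne : ((fun a : ↥G => (a : ℝ × ℝ).2) '' A).Nonempty := hAne.image _
  have : ∃ t ∈ (fun a : ↥G => (a : ℝ × ℝ).2) '' A, t < ε := by
    by_contra h
    push_neg at h
    have := le_csInf hTne h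
    rw [h0] at this
    linarith
  obtain ⟨t, ⟨g, hgA, rfl⟩, ht⟩ := this
  obtain ⟨hgpos, hg0, hg1⟩ := hG2 (g : ℝ × ℝ) g.2
  have hdist : dist (F (g : ℝ × ℝ)) p0 < ε := by
    rw [Prod.dist_eq]
    have h1 : dist (F (g : ℝ × ℝ)).1 p0.1 < ε := by
      simp only [hF, hp0, Real.dist_eq]
      have : (g : ℝ × ℝ).1 * (g : ℝ × ℝ).2 + (1 - (g : ℝ × ℝ).2) / 2 - 1/2
          = (g : ℝ × ℝ).2 * ((g : ℝ × ℝ).1 - 1/2) := by ring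
      rw [this, abs_mul, abs_of_pos hgpos]
      have habs : |(g : ℝ × ℝ).1 - 1/2| ≤ 1/2 := by
        rw [abs_le]; constructor <;> linarith
      nlinarith
    have h2 : dist (F (g : ℝ × ℝ)).2 p0.2 < ε := by
      simp only [hF, hp0, Real.dist_eq]
      rw [sub_zero, abs_of_pos hgpos]; exact ht
    exact max_lt h1 h2
  have hmem : F (g : ℝ × ℝ) ∈ Y ∩ (u ∩ v) :=
    ⟨hmemY g, hball hdist, hgA⟩
  simp [hdis] at hmem

theorem nabla_connected_of_clopen_inf_zero
    (φ : ↥cantorSet → ℝ) (hrange : ∀ x, φ x ∈ Icc (0 : ℝ) 1)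
    (husc : ∀ t : ℝ, IsOpen {x : ↥cantorSet | φ x < t})
    (G : Set (ℝ × ℝ))
    (hG : G = {p : ℝ × ℝ | ∃ x : ↥cantorSet, 0 < φ x ∧ p = ((x : ℝ), φ x)})
    (hinf : ∀ A : Set ↥G, IsClopen A → A.Nonempty →
      sInf ((fun a : ↥G => (a : ℝ × ℝ).2) '' A) = 0) :
    IsConnected
      ((fun p : ℝ × ℝ => (p.1 * p.2 + (1 - p.2) / 2, p.2)) '' G ∪
        {((1 / 2 : ℝ), (0 : ℝ))}) := by
  have hG2 : ∀ g ∈ G, 0 < g.2 ∧ g.1 ∈ Icc (0:ℝ) 1 := by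
    intro g hg
    rw [hG] at hg
    obtain ⟨x, hx, rfl⟩ := hg
    exact ⟨hx, cantorSet_subset_unitInterval x.2⟩
  constructor
  · exact ⟨((1/2 : ℝ), (0 : ℝ)), Or.inr rfl⟩
  · intro u v hu hv hsub hune hvne
    by_contra h
    rw [Set.not_nonempty_iff_eq_empty] at h
    have hp0 : ((1/2 : ℝ), (0 : ℝ)) ∈ u ∪ v := hsub (Or.inr rfl)
    rcases hp0 with hpu | hpv
    · exact absurd (nabla_key G hG2 hinf u v hu hv hsub hpu h hvne) id
    · have h' : ((fun p : ℝ × ℝ => (p.1 * p.2 + (1 - p.2) / 2, p.2)) '' G ∪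
          {((1 / 2 : ℝ), (0 : ℝ))}) ∩ (v ∩ u) = ∅ := by
        rw [Set.inter_comm v u]; exact h
      exact absurd (nabla_key G hG2 hinf v u hv hu
        (by rwa [Set.union_comm v u]) hpv h' hune) id
end
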